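/- Let τ be a θ-compatible stopping time with 𝔼_x τ < ∞ for every x ∈ 𝐗, and let μ be a finite nonzero P-invariant borelian measure on 𝐗. Then S*μ is a finite nonzero Q-invariant measure on 𝐗, S*μ is absolutely continuous with respect to μ, and R*S*μ = μ. -/

import Mathlib

open MeasureTheory Filter Set Topology
open scoped ENNReal NNReal ENat

noncomputable section

/-- The shift on path space. -/
def pshift {X : Type*} (ω : ℕ → X) : ℕ → X := fun n => ω (n + 1)

/-- The natural filtration on path space: the σ-algebra generated by the first `n+1`
coordinates. -/
def pathFiltration (X : Type*) [MeasurableSpace X] (n : ℕ) : MeasurableSpace (ℕ → X) :=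
  MeasurableSpace.comap (fun ω (i : Fin (n + 1)) => ω (i : ℕ)) inferInstance

/-- A Markov chain on `X`, given by the family of its path-space laws `ℙ_x`. -/
structure MarkovChain (X : Type*) [MeasurableSpace X] where
  law : X → Measure (ℕ → X)
  prob : ∀ x, IsProbabilityMeasure (law x)
  meas_law : Measurable law
  start : ∀ x, (law x).map (fun ω => ω 0) = Measure.dirac x
  markov : ∀ (x : X) (n : ℕ) (A : Set (ℕ → X)),
      MeasurableSet[pathFiltration X n] A → ∀ g : (ℕ → X) → ℝ≥0∞, Measurable g →
      ∫⁻ ω in A, g (fun k => ω (k + n)) ∂law x = ∫⁻ ω in A, ∫⁻ η, g η ∂law (ω n) ∂law x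

variable {X : Type*} [MeasurableSpace X]

/-- A stopping time on path space, with values in `ℕ∞`. -/
def IsPathStoppingTime (τ : (ℕ → X) → ℕ∞) : Prop :=
  ∀ n : ℕ, MeasurableSet[pathFiltration X n] {ω | τ ω = (n : ℕ∞)}

/-- `τ` is θ-compatible: `ℙ_x(τ = 0) = 0` and, almost everywhere, `τ ≥ 2` implies
`τ ∘ θ = τ - 1`. -/
def ThetaCompatible (M : MarkovChain X) (τ : (ℕ → X) → ℕ∞) : Prop :=
  (∀ x, M.law x {ω | τ ω = 0} = 0) ∧
    ∀ x, ∀ᵐ ω ∂M.law x, 2 ≤ τ ω → τ (pshift ω) = τ ω - 1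

/-- The Markov operator `P` on nonnegative functions: `Pf(x) = 𝔼_x f(X_1)`. -/
def Pop (M : MarkovChain X) (f : X → ℝ≥0∞) (x : X) : ℝ≥0∞ := ∫⁻ ω, f (ω 1) ∂M.law x

/-- The induced operator `Q`: `Qg(x) = ∫_{τ<∞} g(X_τ) dℙ_x`. -/
def Qop (M : MarkovChain X) (τ : (ℕ → X) → ℕ∞) (g : X → ℝ≥0∞) (x : X) : ℝ≥0∞ :=
  ∫⁻ ω in {ω | τ ω ≠ ⊤}, g (ω (τ ω).toNat) ∂M.law x

/-- The operator `S`: `Sf(x) = ∫_{τ=1} f(X_1) dℙ_x`. -/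
def Sop (M : MarkovChain X) (τ : (ℕ → X) → ℕ∞) (f : X → ℝ≥0∞) (x : X) : ℝ≥0∞ :=
  ∫⁻ ω in {ω | τ ω = 1}, f (ω 1) ∂M.law x

/-- The operator `R`: `Rf(x) = ∫_{τ<∞} (f(X_0) + ⋯ + f(X_{τ-1})) dℙ_x`. -/
def Rop (M : MarkovChain X) (τ : (ℕ → X) → ℕ∞) (f : X → ℝ≥0∞) (x : X) : ℝ≥0∞ :=
  ∫⁻ ω in {ω | τ ω ≠ ⊤}, ∑ k ∈ Finset.range (τ ω).toNat, f (ω k) ∂M.law x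

/-- `𝔼_x τ`, with values in `[0,∞]`. -/
def EtauE (M : MarkovChain X) (τ : (ℕ → X) → ℕ∞) (x : X) : ℝ≥0∞ :=
  ∫⁻ ω, (τ ω : ℝ≥0∞) ∂M.law x

/-- `μ` is `P`-invariant: `∫ Pf dμ = ∫ f dμ` for every bounded nonnegative borelian `f`. -/
def PInvariant (M : MarkovChain X) (μ : Measure X) : Prop :=
  ∀ f : X → ℝ≥0∞, Measurable f → (∃ C : ℝ≥0∞, C ≠ ⊤ ∧ ∀ x, f x ≤ C) →
    ∫⁻ x, Pop M f x ∂μ = ∫⁻ x, f x ∂μ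

/-- `ν` is `Q`-invariant: `∫ Qf dν = ∫ f dν` for every bounded nonnegative borelian `f`. -/
def QInvariant (M : MarkovChain X) (τ : (ℕ → X) → ℕ∞) (ν : Measure X) : Prop :=
  ∀ f : X → ℝ≥0∞, Measurable f → (∃ C : ℝ≥0∞, C ≠ ⊤ ∧ ∀ x, f x ≤ C) →
    ∫⁻ x, Qop M τ f x ∂ν = ∫⁻ x, f x ∂ν

/-- `ν = S*μ`, i.e. `ν(A) = ∫ S𝟙_A dμ` for every borelian `A`. -/
def SstarEq (M : MarkovChain X) (τ : (ℕ → X) → ℕ∞) (μ ν : Measure X) : Prop :=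
  ∀ A : Set X, MeasurableSet A → ν A = ∫⁻ x, Sop M τ (A.indicator 1) x ∂μ

/-- `m = R*ν`, i.e. `m(A) = ∫ R𝟙_A dν` for every borelian `A`. -/
def RstarEq (M : MarkovChain X) (τ : (ℕ → X) → ℕ∞) (ν m : Measure X) : Prop :=
  ∀ A : Set X, MeasurableSet A → m A = ∫⁻ x, Rop M τ (A.indicator 1) x ∂ν

/-- the real-valued Markov operator -/
def Pr (M : MarkovChain X) (f : X → ℝ) (x : X) : ℝ := ∫ ω, f (ω 1) ∂M.law x

/-- the real-valued induced operator -/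
def Qr (M : MarkovChain X) (τ : (ℕ → X) → ℕ∞) (g : X → ℝ) (x : X) : ℝ :=
  ∫ ω in {ω | τ ω ≠ ⊤}, g (ω (τ ω).toNat) ∂M.law x

/-- the real-valued operator `S` -/
def Sr (M : MarkovChain X) (τ : (ℕ → X) → ℕ∞) (f : X → ℝ) (x : X) : ℝ :=
  ∫ ω in {ω | τ ω = 1}, f (ω 1) ∂M.law x

/-- the real-valued operator `R` -/
def Rr (M : MarkovChain X) (τ : (ℕ → X) → ℕ∞) (f : X → ℝ) (x : X) : ℝ :=
  ∫ ω in {ω | τ ω ≠ ⊤}, ∑ k ∈ Finset.range (τ ω).toNat, f (ω k) ∂M.law x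

/-- `𝔼_x τ` as a real number. -/
def Etau (M : MarkovChain X) (τ : (ℕ → X) → ℕ∞) (x : X) : ℝ := (EtauE M τ x).toReal

/-- `B_u = sup (Pu - u) + 1`. -/
def Bu (M : MarkovChain X) (u : X → ℝ) : ℝ :=
  sSup (Set.range fun x => Pr M u x - u x) + 1

/-- the weight `u - Pu + B_u` defining the space `𝓔_u`. -/
def wE (M : MarkovChain X) (u : X → ℝ) : X → ℝ := fun x => u x - Pr M u x + Bu M u

/-- `u` is a drift function: `u ≥ 1`, `u - Pu` is bounded below and, with
`B_u = sup (Pu - u) + 1`, the functions `Qu`, `𝔼τ/u` and `P(u-Pu+B_u)/(u-Pu+B_u)` are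
bounded. -/
structure IsDrift (M : MarkovChain X) (τ : (ℕ → X) → ℕ∞) (u : X → ℝ) : Prop where
  meas : Measurable u
  one_le : ∀ x, 1 ≤ u x
  int_one : ∀ x, Integrable (fun ω => u (ω 1)) (M.law x)
  bdd : BddAbove (Set.range fun x => Pr M u x - u x)
  etau_ne_top : ∀ x, EtauE M τ x ≠ ⊤
  qu_bdd : ∃ C : ℝ, ∀ x, Qr M τ u x ≤ C
  etau_div_bdd : ∃ C : ℝ, ∀ x, Etau M τ x ≤ C * u x
  pw_bdd : ∃ C : ℝ, ∀ x, Pr M (wE M u) x ≤ C * wE M u x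

/-- membership in the weighted space `𝓕^p_v` : `f` is borelian and `|f| ≤ C v^{1/p}`. -/
def MemWp (v : X → ℝ) (p : ℝ) (f : X → ℝ) : Prop :=
  Measurable f ∧ ∃ C : ℝ, ∀ x, |f x| ≤ C * v x ^ (1 / p)

/-- the norm of the weighted space `𝓕^p_v` : `‖f‖ = sup_x |f(x)|/v(x)^{1/p}`. -/
def normWp (v : X → ℝ) (p : ℝ) (f : X → ℝ) : ℝ := ⨆ x, |f x| / v x ^ (1 / p)

/-- ergodicity among a class of invariant measures: a finite nonzero invariant measure is
ergodic if it is not a nontrivial convex combination of two distinct invariant probability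
measures. -/
def ErgodicAmong (Inv : Measure X → Prop) (μ : Measure X) : Prop :=
  μ ≠ 0 ∧ ∀ (ν₁ ν₂ : Measure X) (t : ℝ≥0∞), Inv ν₁ → Inv ν₂ →
    IsProbabilityMeasure ν₁ → IsProbabilityMeasure ν₂ → 0 < t → t < 1 →
    μ = μ Set.univ • (t • ν₁ + (1 - t) • ν₂) → ν₁ = ν₂

/-!
Split `P = S + T` according to whether `τ = 1` or `τ ≥ 2`. By θ-compatibility and the Markov
property at time `1`, a path with `τ ≥ 2` restarts at `X₁` with `τ` lowered by one; this gives
the first-step identities `Q = S + T Q` and `R_{N+1} f = f + T R_N f`, where `R_N` truncates the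
sum defining `R` at time `N`. Integrating against the `P`-invariant `μ` and cancelling the finite
terms `∫ T g dμ`, the first identity gives `∫ S Q f dμ = ∫ S f dμ`, i.e. `S*μ` is `Q`-invariant,
and the second gives `∫ S R_N 𝟙_A dμ = μ(A) - ∫ (R_{N+1} - R_N) 𝟙_A dμ`, where the error is at
most `ℙ_μ(τ > N) → 0`. Monotone convergence in `N` then yields `R*S*μ = μ`, and `S ≤ P` yields
`S*μ ≤ μ`.
-/

lemma ENat.two_le_iff (t : ℕ∞) : 2 ≤ t ↔ t ≠ 0 ∧ t ≠ 1 := by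
  rw [← one_add_one_eq_two, ENat.add_one_le_iff ENat.one_ne_top, ← not_le, Order.le_one_iff,
    not_or]

section StoppingTime

variable {τ : (ℕ → X) → ℕ∞}

lemma pathFiltration_le (n : ℕ) :
    pathFiltration X n ≤ (inferInstance : MeasurableSpace (ℕ → X)) :=
  (measurable_pi_lambda _ fun _ => measurable_pi_apply _).comap_le

lemma pathFiltration_mono {m n : ℕ} (h : m ≤ n) : pathFiltration X m ≤ pathFiltration X n := by
  have hcomp : (fun ω (i : Fin (m + 1)) => ω (i : ℕ)) =
      (fun g (i : Fin (m + 1)) => g (Fin.castLE (by omega) i)) ∘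
        fun (ω : ℕ → X) (i : Fin (n + 1)) => ω (i : ℕ) := rfl
  rw [pathFiltration, pathFiltration, hcomp, ← MeasurableSpace.comap_comp]
  exact MeasurableSpace.comap_mono (measurable_pi_lambda _ fun _ => measurable_pi_apply _).comap_le

namespace IsPathStoppingTime

variable (hst : IsPathStoppingTime τ)
include hst

lemma measurableSet_eq (n : ℕ) : MeasurableSet {ω | τ ω = n} :=
  pathFiltration_le n _ (hst n)

lemma measurable : Measurable τ := by
  refine measurable_to_countable' fun t => ?_
  induction t using ENat.recTopCoe with
  | top =>
    have : τ ⁻¹' {⊤} = (⋃ n : ℕ, {ω | τ ω = n})ᶜ := by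
      ext ω
      simp only [Set.mem_preimage, Set.mem_singleton_iff, Set.mem_compl_iff, Set.mem_iUnion,
        Set.mem_ofPred_eq, not_exists]
      induction τ ω using ENat.recTopCoe <;> simp
    rw [this]
    exact (MeasurableSet.iUnion hst.measurableSet_eq).compl
  | coe n => exact hst.measurableSet_eq n

lemma measurableSet_preimage (s : Set ℕ∞) : MeasurableSet (τ ⁻¹' s) :=
  hst.measurable .of_discrete

lemma measurableSet_eq_one : MeasurableSet[pathFiltration X 1] {ω | τ ω = 1} := by
  simpa using hst 1

lemma measurableSet_two_le : MeasurableSet[pathFiltration X 1] {ω | 2 ≤ τ ω} := by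
  have h0 : MeasurableSet[pathFiltration X 1] {ω | τ ω = 0} := by
    simpa using pathFiltration_mono zero_le_one _ (hst 0)
  have : {ω | 2 ≤ τ ω} = ({ω | τ ω = 0} ∪ {ω | τ ω = 1})ᶜ := by
    ext ω
    simp only [Set.mem_ofPred_eq, Set.mem_compl_iff, Set.mem_union, ENat.two_le_iff, not_or]
  rw [this]
  exact (h0.union hst.measurableSet_eq_one).compl

end IsPathStoppingTime

end StoppingTime

lemma lintegral_eq_setLIntegral_eq_one_add_two_le {τ : (ℕ → X) → ℕ∞}
    (hst : IsPathStoppingTime τ) {P : Measure (ℕ → X)} (h0 : P {ω | τ ω = 0} = 0)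
    (g : (ℕ → X) → ℝ≥0∞) :
    ∫⁻ ω, g ω ∂P = ∫⁻ ω in {ω | τ ω = 1}, g ω ∂P + ∫⁻ ω in {ω | 2 ≤ τ ω}, g ω ∂P := by
  have hcompl : {ω | τ ω = 0}ᶜ = {ω | τ ω = 1} ∪ {ω | 2 ≤ τ ω} := by
    ext ω
    rcases eq_or_ne (τ ω) 1 with h | h <;> simp [ENat.two_le_iff, h]
  have hdisj : Disjoint {ω | τ ω = 1} {ω | 2 ≤ τ ω} :=
    Set.disjoint_left.2 fun ω h1 h2 => ((ENat.two_le_iff _).1 h2).2 h1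
  rw [← lintegral_add_compl g (A := {ω | τ ω = 0}) (hst.measurableSet_preimage {0}),
    setLIntegral_measure_zero _ _ h0, zero_add, hcompl,
    lintegral_union (pathFiltration_le 1 _ hst.measurableSet_two_le) hdisj]

/-- The operator `T` of the decomposition `P = S + T`. -/
def Tcont (M : MarkovChain X) (τ : (ℕ → X) → ℕ∞) (g : X → ℝ≥0∞) (x : X) : ℝ≥0∞ :=
  ∫⁻ ω in {ω | 2 ≤ τ ω}, g (ω 1) ∂M.law x

section Operators

variable {M : MarkovChain X} {τ : (ℕ → X) → ℕ∞}

lemma measurable_setLIntegral_law {g : (ℕ → X) → ℝ≥0∞} (hg : Measurable g)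
    {s : Set (ℕ → X)} (hs : MeasurableSet s) : Measurable fun x => ∫⁻ ω in s, g ω ∂M.law x := by
  simp_rw [← lintegral_indicator hs]
  exact (Measure.measurable_lintegral (hg.indicator hs)).comp M.meas_law

lemma lintegral_law_eval_zero {f : X → ℝ≥0∞} (hf : Measurable f) (x : X) :
    ∫⁻ ω, f (ω 0) ∂M.law x = f x := by
  rw [← lintegral_map hf (measurable_pi_apply 0), M.start x, lintegral_dirac' x hf]

lemma Sop_le_Pop (f : X → ℝ≥0∞) (x : X) : Sop M τ f x ≤ Pop M f x :=
  setLIntegral_le_lintegral _ _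

lemma measurable_Sop (hst : IsPathStoppingTime τ) {f : X → ℝ≥0∞} (hf : Measurable f) :
    Measurable (Sop M τ f) :=
  measurable_setLIntegral_law (hf.comp (measurable_pi_apply 1))
    (pathFiltration_le 1 _ hst.measurableSet_eq_one)

lemma Pop_eq_Sop_add_Tcont (hst : IsPathStoppingTime τ) (hθ : ThetaCompatible M τ)
    (f : X → ℝ≥0∞) (x : X) : Pop M f x = Sop M τ f x + Tcont M τ f x :=
  lintegral_eq_setLIntegral_eq_one_add_two_le hst (hθ.1 x) _

lemma setLIntegral_two_le_comp_pshift (hst : IsPathStoppingTime τ)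
    {G : (ℕ → X) → ℝ≥0∞} (hG : Measurable G) (x : X) :
    ∫⁻ ω in {ω | 2 ≤ τ ω}, G (pshift ω) ∂M.law x =
      Tcont M τ (fun y => ∫⁻ η, G η ∂M.law y) x :=
  M.markov x 1 _ hst.measurableSet_two_le G hG

end Operators

section Induced

variable {M : MarkovChain X} {τ : (ℕ → X) → ℕ∞}

lemma measurable_eval_toNat (hτ : Measurable τ) : Measurable fun ω : ℕ → X => ω (τ ω).toNat :=
  (measurable_from_prod_countable_left (f := fun p : (ℕ → X) × ℕ => p.1 p.2)
    fun n => measurable_pi_apply n).comp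
      (measurable_id.prodMk ((measurable_from_top (f := ENat.toNat)).comp hτ))

omit [MeasurableSpace X] in
lemma indicator_stopped_pshift (f : X → ℝ≥0∞) {ω : ℕ → X} (h2 : 2 ≤ τ ω)
    (hs : τ (pshift ω) = τ ω - 1) :
    {ω | τ ω ≠ ⊤}.indicator (fun ω => f (ω (τ ω).toNat)) (pshift ω) =
      {ω | τ ω ≠ ⊤}.indicator (fun ω => f (ω (τ ω).toNat)) ω := by
  rcases eq_or_ne (τ ω) ⊤ with h | h
  · simp [Set.indicator, hs, h]
  obtain ⟨n, hn⟩ := ENat.ne_top_iff_exists.1 h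
  have hn2 : 2 ≤ n := by rw [← hn] at h2; exact_mod_cast h2
  have hsub : ((n : ℕ∞) - 1).toNat + 1 = n := by
    rw [← Nat.cast_one, ← ENat.natCast_sub, ENat.toNat_natCast]; omega
  simp [Set.indicator, hs, ← hn, pshift, hsub]

lemma Qop_eq_lintegral_indicator (hst : IsPathStoppingTime τ) (f : X → ℝ≥0∞) (x : X) :
    Qop M τ f x = ∫⁻ ω, {ω | τ ω ≠ ⊤}.indicator (fun ω => f (ω (τ ω).toNat)) ω ∂M.law x :=
  (lintegral_indicator (hst.measurableSet_preimage {⊤}).compl _).symm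

lemma measurable_Qop (hst : IsPathStoppingTime τ) {f : X → ℝ≥0∞} (hf : Measurable f) :
    Measurable (Qop M τ f) :=
  measurable_setLIntegral_law (hf.comp (measurable_eval_toNat hst.measurable))
    (hst.measurableSet_preimage {⊤}).compl

lemma Qop_le {f : X → ℝ≥0∞} {C : ℝ≥0∞} (hfC : ∀ y, f y ≤ C) (x : X) : Qop M τ f x ≤ C :=
  have := M.prob x
  (setLIntegral_le_lintegral _ _).trans (lintegral_le_const (ae_of_all _ fun _ => hfC _))

lemma Qop_eq_Sop_add_Tcont_Qop (hst : IsPathStoppingTime τ) (hθ : ThetaCompatible M τ)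
    {f : X → ℝ≥0∞} (hf : Measurable f) (x : X) :
    Qop M τ f x = Sop M τ f x + Tcont M τ (Qop M τ f) x := by
  set F := {ω | τ ω ≠ ⊤}.indicator (fun ω => f (ω (τ ω).toNat))
  have hF : Measurable F := (hf.comp (measurable_eval_toNat hst.measurable)).indicator
    (hst.measurableSet_preimage {⊤}).compl
  rw [Qop_eq_lintegral_indicator hst, lintegral_eq_setLIntegral_eq_one_add_two_le hst (hθ.1 x)]
  congr 1
  · refine setLIntegral_congr_fun (pathFiltration_le 1 _ hst.measurableSet_eq_one) fun ω hω => ?_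
    simp [show τ ω = 1 from hω]
  · calc ∫⁻ ω in {ω | 2 ≤ τ ω}, F ω ∂M.law x
        = ∫⁻ ω in {ω | 2 ≤ τ ω}, F (pshift ω) ∂M.law x := by
          refine setLIntegral_congr_fun_ae (pathFiltration_le 1 _ hst.measurableSet_two_le) ?_
          filter_upwards [hθ.2 x] with ω hω h2
          exact (indicator_stopped_pshift f h2 (hω h2)).symm
      _ = Tcont M τ (Qop M τ f) x := by
          rw [setLIntegral_two_le_comp_pshift hst hF,
            funext (Qop_eq_lintegral_indicator (M := M) hst f)]

end Induced

/-- The measure `S*μ`: the law of `X₁` on `{τ = 1}` under the chain started from `μ`. -/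
def sStar (M : MarkovChain X) (τ : (ℕ → X) → ℕ∞) (μ : Measure X) : Measure X :=
  ((μ.bind M.law).restrict {ω | τ ω = 1}).map fun ω => ω 1

section SStar

variable {M : MarkovChain X} {τ : (ℕ → X) → ℕ∞} {μ : Measure X}

lemma lintegral_sStar (hst : IsPathStoppingTime τ) {f : X → ℝ≥0∞} (hf : Measurable f) :
    ∫⁻ y, f y ∂sStar M τ μ = ∫⁻ x, Sop M τ f x ∂μ := by
  have hs := pathFiltration_le 1 _ hst.measurableSet_eq_one
  have hf1 : Measurable fun ω : ℕ → X => f (ω 1) := hf.comp (measurable_pi_apply 1)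
  rw [sStar, lintegral_map hf (measurable_pi_apply 1), ← lintegral_indicator hs,
    Measure.lintegral_bind M.meas_law.aemeasurable (hf1.indicator hs).aemeasurable]
  simp_rw [lintegral_indicator hs]
  rfl

lemma sStarEq_sStar (hst : IsPathStoppingTime τ) : SstarEq M τ μ (sStar M τ μ) := fun A hA => by
  rw [← lintegral_indicator_one hA, lintegral_sStar hst (measurable_one.indicator hA)]

lemma sStar_le (hst : IsPathStoppingTime τ) (hinv : PInvariant M μ) : sStar M τ μ ≤ μ := by
  refine Measure.le_iff.2 fun A hA => ?_
  have h1 : ∀ y, A.indicator (1 : X → ℝ≥0∞) y ≤ 1 := Set.indicator_le_self' fun _ _ => zero_le_one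
  calc sStar M τ μ A = ∫⁻ x, Sop M τ (A.indicator 1) x ∂μ := sStarEq_sStar hst A hA
    _ ≤ ∫⁻ x, Pop M (A.indicator 1) x ∂μ := lintegral_mono fun x => Sop_le_Pop _ x
    _ = μ A := by
      rw [hinv _ (measurable_one.indicator hA) ⟨1, ENNReal.one_ne_top, h1⟩,
        lintegral_indicator_one hA]

lemma qInvariant_sStar [IsFiniteMeasure μ] (hst : IsPathStoppingTime τ)
    (hθ : ThetaCompatible M τ) (hinv : PInvariant M μ) : QInvariant M τ (sStar M τ μ) := by
  rintro f hf ⟨C, hC, hfC⟩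
  have hQf := measurable_Qop (M := M) hst hf
  have hQbdd : ∃ C, C ≠ ⊤ ∧ ∀ y, Qop M τ f y ≤ C := ⟨C, hC, Qop_le hfC⟩
  have hPQ := hinv _ hQf hQbdd
  have hTQ : ∫⁻ x, Tcont M τ (Qop M τ f) x ∂μ ≠ ⊤ := by
    refine ne_top_of_le_ne_top ?_ (lintegral_mono fun x => setLIntegral_le_lintegral _ _)
    change ∫⁻ x, Pop M (Qop M τ f) x ∂μ ≠ ⊤
    rw [hPQ]
    exact ((lintegral_mono (Qop_le hfC)).trans_lt (lintegral_const_lt_top hC)).ne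
  have hsplit : ∫⁻ x, Sop M τ (Qop M τ f) x ∂μ + ∫⁻ x, Tcont M τ (Qop M τ f) x ∂μ =
      ∫⁻ x, Sop M τ f x ∂μ + ∫⁻ x, Tcont M τ (Qop M τ f) x ∂μ := by
    rw [← lintegral_add_left (measurable_Sop hst hQf), ← lintegral_add_left (measurable_Sop hst hf)]
    simp_rw [← Pop_eq_Sop_add_Tcont hst hθ, ← Qop_eq_Sop_add_Tcont_Qop hst hθ hf]
    exact hPQ
  rw [lintegral_sStar hst hQf, lintegral_sStar hst hf]
  exact (ENNReal.add_left_inj hTQ).1 hsplit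

end SStar

lemma iSup_eq_of_add_eq_add {a s ε : ℕ → ℝ≥0∞} {c : ℝ≥0∞} (ha : ∀ N, a N ≠ ⊤)
    (ha_mono : Monotone a) (hsa : ∀ N, s N + a (N + 1) = c + a N)
    (hε : ∀ N, a (N + 1) ≤ a N + ε N) (hε0 : Tendsto ε atTop (𝓝 0)) : ⨆ N, s N = c := by
  refine le_antisymm (iSup_le fun N => ?_) ?_
  · rw [← ENNReal.add_le_add_iff_right (ha (N + 1)), hsa]
    gcongr
    exact ha_mono N.le_succ
  · have hc : ∀ N, c ≤ (⨆ N, s N) + ε N := fun N => by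
      rw [← ENNReal.add_le_add_iff_right (ha N), ← hsa, add_right_comm]
      calc s N + a (N + 1) ≤ s N + (a N + ε N) := by gcongr; exact hε N
        _ ≤ (⨆ N, s N) + a N + ε N := by rw [← add_assoc]; gcongr; exact le_iSup s N
    simpa using ge_of_tendsto' (tendsto_const_nhds.add hε0) hc

/-- The Birkhoff sum `f(X₀) + ⋯ + f(X_{min(τ,N)-1})` on path space. -/
def truncSum (τ : (ℕ → X) → ℕ∞) (N : ℕ) (f : X → ℝ≥0∞) (ω : ℕ → X) : ℝ≥0∞ :=
  ∑ k ∈ Finset.range N, {ω | (k : ℕ∞) < τ ω}.indicator (fun ω => f (ω k)) ω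

def Rtrunc (M : MarkovChain X) (τ : (ℕ → X) → ℕ∞) (N : ℕ) (f : X → ℝ≥0∞) (x : X) : ℝ≥0∞ :=
  ∫⁻ ω, truncSum τ N f ω ∂M.law x

section TruncSum

variable {τ : (ℕ → X) → ℕ∞} {f : X → ℝ≥0∞} {ω : ℕ → X}

omit [MeasurableSpace X]

lemma truncSum_succ (N : ℕ) :
    truncSum τ (N + 1) f ω =
      truncSum τ N f ω + {ω | (N : ℕ∞) < τ ω}.indicator (fun ω => f (ω N)) ω :=
  Finset.sum_range_succ _ _

lemma truncSum_mono : Monotone fun N => truncSum τ N f ω :=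
  fun _ _ h => Finset.sum_le_sum_of_subset (Finset.range_subset_range.2 h)

lemma truncSum_le (hf : ∀ y, f y ≤ 1) (N : ℕ) : truncSum τ N f ω ≤ N := by
  calc truncSum τ N f ω ≤ ∑ _k ∈ Finset.range N, (1 : ℝ≥0∞) :=
        Finset.sum_le_sum fun k _ => (Set.indicator_le_self _ _ ω).trans (hf _)
    _ = N := by simp

lemma truncSum_succ_of_eq_one (h1 : τ ω = 1) (N : ℕ) : truncSum τ (N + 1) f ω = f (ω 0) := by
  rw [truncSum, Finset.sum_range_succ']
  simp [h1]

lemma truncSum_succ_of_pshift (h2 : 2 ≤ τ ω) (hs : τ (pshift ω) = τ ω - 1) (N : ℕ) :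
    truncSum τ (N + 1) f ω = f (ω 0) + truncSum τ N f (pshift ω) := by
  rw [truncSum, Finset.sum_range_succ', add_comm]
  congr 1
  · simp [((ENat.two_le_iff _).1 h2).1]
  · refine Finset.sum_congr rfl fun k _ => ?_
    simp [Set.indicator, hs, lt_tsub_iff_right, pshift]

lemma iSup_truncSum (h : τ ω ≠ ⊤) :
    ⨆ N, truncSum τ N f ω = ∑ k ∈ Finset.range (τ ω).toNat, f (ω k) := by
  obtain ⟨n, hn⟩ := ENat.ne_top_iff_exists.1 h
  unfold truncSum
  rw [← ENNReal.tsum_eq_iSup_nat, ← hn, ENat.toNat_natCast,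
    tsum_eq_sum (s := Finset.range n) fun k hk => ?_]
  · refine Finset.sum_congr rfl fun k hk => Set.indicator_of_mem ?_ _
    change (k : ℕ∞) < τ ω
    rw [← hn]
    exact_mod_cast Finset.mem_range.1 hk
  · refine Set.indicator_of_notMem ?_ _
    change ¬(k : ℕ∞) < τ ω
    rw [← hn]
    exact_mod_cast Finset.mem_range.not.1 hk

end TruncSum

section Rtrunc

variable {M : MarkovChain X} {τ : (ℕ → X) → ℕ∞} {f : X → ℝ≥0∞}

lemma measurable_truncSum (hτ : Measurable τ) (hf : Measurable f) (N : ℕ) :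
    Measurable (truncSum τ N f) :=
  Finset.measurable_sum _ fun k _ =>
    (hf.comp (measurable_pi_apply k)).indicator
      (hτ (MeasurableSet.of_discrete (s := Set.Ioi (k : ℕ∞))))

lemma measurable_Rtrunc (hst : IsPathStoppingTime τ) (hf : Measurable f) (N : ℕ) :
    Measurable (Rtrunc M τ N f) :=
  (Measure.measurable_lintegral (measurable_truncSum hst.measurable hf N)).comp M.meas_law

lemma Rtrunc_mono : Monotone fun N => Rtrunc M τ N f :=
  fun _ _ h _ => lintegral_mono fun _ => truncSum_mono h

lemma Rtrunc_le (hf1 : ∀ y, f y ≤ 1) (N : ℕ) (x : X) : Rtrunc M τ N f x ≤ N :=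
  have := M.prob x
  lintegral_le_const (ae_of_all _ fun _ => truncSum_le hf1 N)

lemma Rtrunc_succ_le (hst : IsPathStoppingTime τ) (hf : Measurable f) (hf1 : ∀ y, f y ≤ 1)
    (N : ℕ) (x : X) :
    Rtrunc M τ (N + 1) f x ≤ Rtrunc M τ N f x + M.law x {ω | (N : ℕ∞) < τ ω} := by
  have hs : MeasurableSet {ω | (N : ℕ∞) < τ ω} := hst.measurableSet_preimage (Set.Ioi _)
  simp_rw [Rtrunc, truncSum_succ]
  rw [lintegral_add_left (measurable_truncSum hst.measurable hf N), ← lintegral_indicator_one hs]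
  gcongr with ω
  exact hf1 _

lemma Rtrunc_succ (hst : IsPathStoppingTime τ) (hθ : ThetaCompatible M τ) (hf : Measurable f)
    (N : ℕ) (x : X) : Rtrunc M τ (N + 1) f x = f x + Tcont M τ (Rtrunc M τ N f) x := by
  have hf0 : Measurable fun ω : ℕ → X => f (ω 0) := hf.comp (measurable_pi_apply 0)
  rw [Rtrunc, lintegral_eq_setLIntegral_eq_one_add_two_le hst (hθ.1 x),
    setLIntegral_congr_fun (pathFiltration_le 1 _ hst.measurableSet_eq_one)
      fun ω hω => truncSum_succ_of_eq_one hω N,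
    setLIntegral_congr_fun_ae (pathFiltration_le 1 _ hst.measurableSet_two_le)
      (by filter_upwards [hθ.2 x] with ω hω h2 using truncSum_succ_of_pshift h2 (hω h2) N),
    lintegral_add_left hf0, ← add_assoc,
    ← lintegral_eq_setLIntegral_eq_one_add_two_le hst (hθ.1 x),
    lintegral_law_eval_zero hf, setLIntegral_two_le_comp_pshift hst
      (measurable_truncSum hst.measurable hf N)]
  rfl

lemma ae_ne_top_of_EtauE_ne_top (hst : IsPathStoppingTime τ) {x : X}
    (hτ : EtauE M τ x ≠ ⊤) : ∀ᵐ ω ∂M.law x, τ ω ≠ ⊤ := by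
  filter_upwards [ae_lt_top (measurable_from_top.comp hst.measurable) hτ] with ω hω
  simpa using hω.ne

lemma Rop_eq_iSup_Rtrunc (hst : IsPathStoppingTime τ) {x : X} (hτ : ∀ᵐ ω ∂M.law x, τ ω ≠ ⊤)
    (hf : Measurable f) : Rop M τ f x = ⨆ N, Rtrunc M τ N f x := by
  unfold Rtrunc
  rw [Rop, Measure.restrict_eq_self_of_ae_mem (s := {ω | τ ω ≠ ⊤}) hτ,
    ← lintegral_iSup (measurable_truncSum hst.measurable hf) fun _ _ h _ => truncSum_mono h]
  refine lintegral_congr_ae ?_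
  filter_upwards [hτ] with ω hω using (iSup_truncSum hω).symm

lemma tendsto_lintegral_law_natCast_lt (hst : IsPathStoppingTime τ) {μ : Measure X}
    [IsFiniteMeasure μ] (hτ : ∀ x, ∀ᵐ ω ∂M.law x, τ ω ≠ ⊤) :
    Tendsto (fun N : ℕ => ∫⁻ x, M.law x {ω | (N : ℕ∞) < τ ω} ∂μ) atTop (𝓝 0) := by
  have hs : ∀ N : ℕ, MeasurableSet {ω | (N : ℕ∞) < τ ω} :=
    fun N => hst.measurableSet_preimage (Set.Ioi _)
  simp_rw [← Measure.bind_apply (hs _) M.meas_law.aemeasurable]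
  have hfin : μ.bind M.law Set.univ ≠ ⊤ := by
    rw [Measure.bind_apply MeasurableSet.univ M.meas_law.aemeasurable,
      lintegral_congr fun x => (M.prob x).measure_univ, lintegral_one]
    exact measure_ne_top μ _
  have hinter : ⋂ N : ℕ, {ω | (N : ℕ∞) < τ ω} = {ω | τ ω = ⊤} := by
    ext ω
    simp [ENat.eq_top_iff_forall_gt]
  have hnull : μ.bind M.law {ω | τ ω = ⊤} = 0 := by
    rw [Measure.bind_apply (s := {ω | τ ω = ⊤}) (hst.measurableSet_preimage {⊤})
      M.meas_law.aemeasurable]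
    have h : ∀ x, M.law x {ω | τ ω = ⊤} = 0 := fun x => by simpa using ae_iff.1 (hτ x)
    simp [h]
  simpa [hinter, hnull, Function.comp_def] using
    tendsto_measure_iInter_atTop (fun N => (hs N).nullMeasurableSet)
    (fun m n h => Set.ofPred_subset_ofPred.2 fun ω hω => lt_of_le_of_lt (Nat.cast_le.2 h) hω)
    ⟨0, ne_top_of_le_ne_top hfin (measure_mono (Set.subset_univ _))⟩

end Rtrunc

lemma rStarEq_sStar {M : MarkovChain X} {τ : (ℕ → X) → ℕ∞} {μ : Measure X} [IsFiniteMeasure μ]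
    (hst : IsPathStoppingTime τ) (hθ : ThetaCompatible M τ) (hτ : ∀ x, ∀ᵐ ω ∂M.law x, τ ω ≠ ⊤)
    (hinv : PInvariant M μ) : RstarEq M τ (sStar M τ μ) μ := by
  intro A hA
  set f := A.indicator (1 : X → ℝ≥0∞)
  have hf : Measurable f := measurable_one.indicator hA
  have hf1 : ∀ y, f y ≤ 1 := Set.indicator_le_self' fun _ _ => zero_le_one
  have hR := measurable_Rtrunc (M := M) hst hf
  rw [lintegral_congr fun x => Rop_eq_iSup_Rtrunc hst (hτ x) hf, lintegral_iSup hR Rtrunc_mono]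
  simp_rw [lintegral_sStar hst (hR _)]
  refine (iSup_eq_of_add_eq_add (a := fun N => ∫⁻ x, Rtrunc M τ N f x ∂μ) (fun N => ?_)
    (fun _ _ h => lintegral_mono (Rtrunc_mono h)) (fun N => ?_) (fun N => ?_)
    (tendsto_lintegral_law_natCast_lt (μ := μ) hst hτ)).symm
  · exact ((lintegral_mono (Rtrunc_le hf1 N)).trans_lt
      (lintegral_const_lt_top (ENNReal.natCast_ne_top N))).ne
  · -- both sides equal `∫ S R_N f dμ + μ A + ∫ T R_N f dμ`
    rw [← hinv _ (hR N) ⟨N, ENNReal.natCast_ne_top N, Rtrunc_le hf1 N⟩]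
    simp_rw [Rtrunc_succ hst hθ hf N, Pop_eq_Sop_add_Tcont hst hθ]
    rw [lintegral_add_left hf, lintegral_add_left (measurable_Sop hst (hR N)),
      lintegral_indicator_one hA]
    ring
  · rw [← lintegral_add_left (hR N)]
    exact lintegral_mono (Rtrunc_succ_le hst hf hf1 N)

theorem stmt2_general
    (M : MarkovChain X) (τ : (ℕ → X) → ℕ∞)
    (hst : IsPathStoppingTime τ) (hθ : ThetaCompatible M τ)
    (hτ : ∀ x, EtauE M τ x ≠ ⊤)
    (μ : Measure X) [IsFiniteMeasure μ] (hμ0 : μ ≠ 0) (hinv : PInvariant M μ) :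
    ∃ ν : Measure X, SstarEq M τ μ ν ∧ IsFiniteMeasure ν ∧ ν ≠ 0 ∧
      QInvariant M τ ν ∧ ν ≪ μ ∧ RstarEq M τ ν μ := by
  have hR := rStarEq_sStar hst hθ (fun x => ae_ne_top_of_EtauE_ne_top hst (hτ x)) hinv
  refine ⟨sStar M τ μ, sStarEq_sStar hst, isFiniteMeasure_of_le μ (sStar_le hst hinv),
    fun h => hμ0 ?_, qInvariant_sStar hst hθ hinv,
    Measure.absolutelyContinuous_of_le (sStar_le hst hinv), hR⟩
  rw [← Measure.measure_univ_eq_zero, hR Set.univ .univ, h, lintegral_zero_measure]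

/-- Lemma 1.8: if `μ` is a finite nonzero `P`-invariant measure then `S*μ` is a finite
nonzero `Q`-invariant measure, absolutely continuous with respect to `μ`, and
`R*S*μ = μ`. -/
theorem stmt2 [MetricSpace X] [CompleteSpace X] [TopologicalSpace.SeparableSpace X] [BorelSpace X]
    (M : MarkovChain X) (τ : (ℕ → X) → ℕ∞)
    (hst : IsPathStoppingTime τ) (hθ : ThetaCompatible M τ)
    (hτ : ∀ x, EtauE M τ x ≠ ⊤)
    (μ : Measure X) [IsFiniteMeasure μ] (hμ0 : μ ≠ 0) (hinv : PInvariant M μ) :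
    ∃ ν : Measure X, SstarEq M τ μ ν ∧ IsFiniteMeasure ν ∧ ν ≠ 0 ∧
      QInvariant M τ ν ∧ ν ≪ μ ∧ RstarEq M τ ν μ :=
  stmt2_general M τ hst hθ hτ μ hμ0 hinv

end
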